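/- Let Λ be a closed n-manifold and suppose there exists a collection 𝓛 of compact (n+1)-manifolds-with-boundary fillings of Λ such that (a) each L' ∈ 𝓛 satisfies Σ_i dim H_i(L'; F) ≤ c for a fixed constant c, (b) some element of 𝓛 exists, and (c) 𝓛 is closed under concatenation with a fixed cobordism L from Λ to Λ along the boundary. If for some index i₀ one had dim H_{i₀}(L; F) > dim H_{i₀}(Λ; F), then by Mayer–Vietoris the operation of concatenating with L strictly increases dim H_{i₀} of the filling, contradicting the existence of a filling maximizing dim H_{i₀}. Hence dim H_i(L; F) ≤ dim H_i(Λ; F) for all i. -/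

import Mathlib

open Finset

/-! If `Ldim i₀ > Λdim i₀`, concatenating with `L` strictly increases the `i₀`-th Betti number
of a filling, so `𝓛` has no filling maximizing it; but the uniform bound `c` on total homology
makes these Betti numbers bounded, hence a maximizer exists. -/

theorem not_bddAbove_image_of_forall_exists_lt {α X : Type*} [LinearOrder X] [SuccOrder X]
    [IsSuccArchimedean X] {s : Set α} {f : α → X} (hs : s.Nonempty)
    (hf : ∀ a ∈ s, ∃ b ∈ s, f a < f b) : ¬BddAbove (f '' s) := by
  intro hbdd
  obtain ⟨_, ⟨a, ha, rfl⟩, hmax⟩ := hbdd.exists_isGreatest_of_nonempty (hs.image f)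
  obtain ⟨b, hb, hab⟩ := hf a ha
  exact (hmax (Set.mem_image_of_mem f hb)).not_gt hab

/-- Let `Λ` be a closed `n`-manifold, and let `𝓛` be a collection of
(homology dimension vectors of) fillings of `Λ` such that: (a) each `v ∈ 𝓛` has total
dimension at most `c`; (b) `𝓛` is nonempty; (c) `𝓛` is closed under concatenation with a
fixed endocobordism `L` of `Λ`, where by Mayer–Vietoris the concatenation `w` of `v ∈ 𝓛`
with `L` satisfies `w i ≥ v i + dim Hᵢ(L) − dim Hᵢ(Λ)`. Then `dim Hᵢ(L;F) ≤ dim Hᵢ(Λ;F)`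
for all `i` (all homology vanishes above degree `n+1`). Here `Λdim i = dim Hᵢ(Λ;F)`,
`Ldim i = dim Hᵢ(L;F)` and `v i = dim Hᵢ(L';F)` for a filling `L'`. -/
theorem stmt_3 (n c : ℕ) (Λdim Ldim : ℕ → ℕ) (𝓛 : Set (ℕ → ℕ))
    -- (a) uniform bound on the total homology of fillings (from Seidel's isomorphism)
    (htotal : ∀ v ∈ 𝓛, ∑ i ∈ Finset.range (n + 2), v i ≤ c)
    -- (b) some filling exists
    (hne : 𝓛.Nonempty)
    -- (c) closure under concatenation with L, with the Mayer–Vietoris lower bound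
    (hconcat : ∀ v ∈ 𝓛, ∃ w ∈ 𝓛, ∀ i, v i + Ldim i ≤ w i + Λdim i) :
    ∀ i ≤ n + 1, Ldim i ≤ Λdim i := by
  intro i hi
  by_contra! hgrow
  have hincrease : ∀ v ∈ 𝓛, ∃ w ∈ 𝓛, v i < w i := fun v hv ↦ by
    obtain ⟨w, hw, hmv⟩ := hconcat v hv
    exact ⟨w, hw, by linarith [hmv i]⟩
  refine not_bddAbove_image_of_forall_exists_lt hne hincrease ⟨c, ?_⟩
  rintro _ ⟨v, hv, rfl⟩
  calc v i ≤ ∑ j ∈ range (n + 2), v j :=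
        single_le_sum (fun _ _ ↦ Nat.zero_le _) (mem_range.mpr (by omega))
    _ ≤ c := htotal v hv
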